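/- Fix a real parameter g with −2 < g < 2 and set h = √(1 − g²/4), G = g/h. Then for every (b₀,q₀) with q₀ > 0, the function b ↦ K(b,q₀)² is differentiable at b₀ with derivative 2·(b₀ + g·q₀)·K(b₀,q₀)² / B(b₀,q₀). (This is the (b-component of the) formula y_i = (u_i + g·q·b_i)·K²/B for the covariant tangent vector.) -/

import Mathlib

noncomputable def finsH (g : ℝ) : ℝ := Real.sqrt (1 - g ^ 2 / 4)

noncomputable def finsG (g : ℝ) : ℝ := g / finsH g

/-- The characteristic quadratic form `B(b,q) = b² + g·q·b + q²`. -/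
noncomputable def finsB (g b q : ℝ) : ℝ := b ^ 2 + g * q * b + q ^ 2

/-- `L(b,q) = q + (g/2)·b`. -/
noncomputable def finsL (g b q : ℝ) : ℝ := q + (g / 2) * b

/-- The piecewise-defined Finsleroid function `f` on the half-plane `q > 0`. -/
noncomputable def finsF (g b q : ℝ) : ℝ :=
  if 0 < b then -Real.arctan (finsG g / 2) + Real.arctan (finsL g b q / (finsH g * b))
  else if b < 0 then
    Real.pi - Real.arctan (finsG g / 2) + Real.arctan (finsL g b q / (finsH g * b))
  else Real.pi / 2 - Real.arctan (finsG g / 2)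

/-- The Finsleroid-regular metric function `K(b,q) = √(B(b,q))·exp(−(G/2)·f(b,q))`. -/
noncomputable def finsK (g b q : ℝ) : ℝ :=
  Real.sqrt (finsB g b q) * Real.exp (-(finsG g / 2) * finsF g b q)

/-! Away from `b = 0` the function `f` is a constant plus `arctan (L / (h b))`; near `b = 0`,
where `L > 0`, it is a constant minus `arctan (h b / L)`. Since `B = (h b)² + L²`, both charts
have `b`-derivative `-h q / B`. With `K² = B · exp (-G f)` and `G h = g`, the logarithmic
derivative of `K²` is `(2 b + g q) / B + g q / B`. -/

open Real Filter

theorem HasDerivAt.arctan_div {u v : ℝ → ℝ} {u' v' x : ℝ} (hu : HasDerivAt u u' x)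
    (hv : HasDerivAt v v' x) (hx : v x ≠ 0) :
    HasDerivAt (fun y => Real.arctan (u y / v y))
      ((u' * v x - u x * v') / (u x ^ 2 + v x ^ 2)) x := by
  have h := (hu.div hv hx).arctan
  simp only [Pi.div_apply] at h
  refine h.congr_deriv ?_
  field_simp
  ring

section Finsleroid

variable {g : ℝ}

lemma finsH_pos (hg1 : -2 < g) (hg2 : g < 2) : 0 < finsH g :=
  sqrt_pos.mpr (by nlinarith)

lemma finsH_sq (hg1 : -2 < g) (hg2 : g < 2) : finsH g ^ 2 = 1 - g ^ 2 / 4 :=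
  sq_sqrt (by nlinarith)

lemma finsG_mul_finsH (hg1 : -2 < g) (hg2 : g < 2) : finsG g * finsH g = g :=
  div_mul_cancel₀ g (finsH_pos hg1 hg2).ne'

lemma finsB_eq_sq_add_sq (hg1 : -2 < g) (hg2 : g < 2) (b q : ℝ) :
    finsB g b q = (finsH g * b) ^ 2 + finsL g b q ^ 2 := by
  rw [mul_pow, finsH_sq hg1 hg2, finsB, finsL]
  ring

lemma finsB_pos (hg1 : -2 < g) (hg2 : g < 2) (b : ℝ) {q : ℝ} (hq : q ≠ 0) :
    0 < finsB g b q := by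
  rw [finsB_eq_sq_add_sq hg1 hg2]
  rcases eq_or_ne b 0 with rfl | hb
  · simp only [finsL, mul_zero, add_zero, zero_pow two_ne_zero, zero_add]
    positivity
  · have := mul_ne_zero (finsH_pos hg1 hg2).ne' hb
    positivity

lemma hasDerivAt_finsL (g q b : ℝ) : HasDerivAt (fun b => finsL g b q) (g / 2) b := by
  unfold finsL
  simpa using ((hasDerivAt_id b).const_mul (g / 2)).const_add q

lemma hasDerivAt_finsH_mul (g b : ℝ) : HasDerivAt (fun b => finsH g * b) (finsH g) b := by
  simpa using (hasDerivAt_id b).const_mul (finsH g)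

lemma hasDerivAt_finsB (g q b : ℝ) : HasDerivAt (fun b => finsB g b q) (2 * b + g * q) b := by
  simpa [finsB] using (((hasDerivAt_pow 2 b).add ((hasDerivAt_id b).const_mul (g * q))).add_const
    (q ^ 2))

lemma hasDerivAt_arctan_finsL_div (hg1 : -2 < g) (hg2 : g < 2) {b : ℝ} (q : ℝ) (hb : b ≠ 0) :
    HasDerivAt (fun b => arctan (finsL g b q / (finsH g * b)))
      (-(q * finsH g) / finsB g b q) b := by
  convert (hasDerivAt_finsL g q b).arctan_div (hasDerivAt_finsH_mul g b)
    (mul_ne_zero (finsH_pos hg1 hg2).ne' hb) using 1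
  rw [finsB_eq_sq_add_sq hg1 hg2, finsL]
  ring

lemma hasDerivAt_arctan_finsH_mul_div (hg1 : -2 < g) (hg2 : g < 2) {b q : ℝ}
    (hL : finsL g b q ≠ 0) :
    HasDerivAt (fun b => arctan (finsH g * b / finsL g b q)) (q * finsH g / finsB g b q) b := by
  convert (hasDerivAt_finsH_mul g b).arctan_div (hasDerivAt_finsL g q b) hL using 1
  rw [finsB_eq_sq_add_sq hg1 hg2, finsL]
  ring

lemma finsF_eq_of_finsL_pos (hg1 : -2 < g) (hg2 : g < 2) {b q : ℝ} (hL : 0 < finsL g b q) :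
    finsF g b q = π / 2 - arctan (finsG g / 2) - arctan (finsH g * b / finsL g b q) := by
  have hH := finsH_pos hg1 hg2
  rcases lt_trichotomy b 0 with hb | rfl | hb
  · have hx : finsH g * b / finsL g b q < 0 := div_neg_of_neg_of_pos (by nlinarith) hL
    rw [finsF, if_neg hb.not_gt, if_pos hb, ← inv_div (finsH g * b), arctan_inv_of_neg hx]
    ring
  · simp [finsF]
  · have hx : 0 < finsH g * b / finsL g b q := by positivity
    rw [finsF, if_pos hb, ← inv_div (finsH g * b), arctan_inv_of_pos hx]
    ring

lemma hasDerivAt_finsF (hg1 : -2 < g) (hg2 : g < 2) (b : ℝ) {q : ℝ} (hq : 0 < q) :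
    HasDerivAt (fun b => finsF g b q) (-(q * finsH g) / finsB g b q) b := by
  rcases lt_trichotomy b 0 with hb | rfl | hb
  · refine ((hasDerivAt_arctan_finsL_div hg1 hg2 q hb.ne).const_add
      (π - arctan (finsG g / 2))).congr_of_eventuallyEq ?_
    filter_upwards [eventually_lt_nhds hb] with b hb
    rw [finsF, if_neg hb.not_gt, if_pos hb]
  · have hL : 0 < finsL g 0 q := by simpa [finsL] using hq
    have hLnear : ∀ᶠ b in nhds 0, 0 < finsL g b q :=
      (hasDerivAt_finsL g q 0).continuousAt.eventually (eventually_gt_nhds hL)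
    refine (((hasDerivAt_arctan_finsH_mul_div hg1 hg2 hL.ne').const_sub
      (π / 2 - arctan (finsG g / 2))).congr_of_eventuallyEq
      (hLnear.mono fun b hb => finsF_eq_of_finsL_pos hg1 hg2 hb)).congr_deriv ?_
    ring
  · refine ((hasDerivAt_arctan_finsL_div hg1 hg2 q hb.ne').const_add
      (-arctan (finsG g / 2))).congr_of_eventuallyEq ?_
    filter_upwards [eventually_gt_nhds hb] with b hb
    rw [finsF, if_pos hb]

lemma finsK_sq (hg1 : -2 < g) (hg2 : g < 2) (b : ℝ) {q : ℝ} (hq : q ≠ 0) :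
    finsK g b q ^ 2 = finsB g b q * exp (-finsG g * finsF g b q) := by
  rw [finsK, mul_pow, sq_sqrt (finsB_pos hg1 hg2 b hq).le, ← exp_nat_mul]
  congr 2
  push_cast
  ring

end Finsleroid

/-- for `q₀ > 0`, the function `b ↦ K(b,q₀)²` is differentiable at
any `b₀` with derivative `2·(b₀ + g·q₀)·K(b₀,q₀)² / B(b₀,q₀)`. -/
theorem finsleroid_Ksq_deriv_b (g : ℝ) (hg1 : -2 < g) (hg2 : g < 2)
    (b₀ q₀ : ℝ) (hq : 0 < q₀) :
    HasDerivAt (fun b : ℝ => (finsK g b q₀) ^ 2)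
      (2 * (b₀ + g * q₀) * (finsK g b₀ q₀) ^ 2 / finsB g b₀ q₀) b₀ := by
  have hB := finsB_pos hg1 hg2 b₀ hq.ne'
  have hprod := (hasDerivAt_finsB g q₀ b₀).mul
    (((hasDerivAt_finsF hg1 hg2 b₀ hq).const_mul (-finsG g)).exp)
  rw [funext fun b => finsK_sq hg1 hg2 b hq.ne', finsK_sq hg1 hg2 b₀ hq.ne']
  refine hprod.congr_deriv ?_
  field_simp
  linear_combination q₀ * finsG_mul_finsH hg1 hg2
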